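/- arXiv:1603.06498 — 3 statements merged into one kernel-verified Lean document; each statement's English description precedes it below -/
import Mathlib

section
/- Let R > 0, κ > 0, and let α, β : [0,R] × ℝ → ℝ be three times continuously differentiable; define F̂(r,u,p) := α(r,u) + β(r,u)·p (a Lagrangian affine in the derivative variable). Let w : [0,R] → ℝ be continuously differentiable and suppose: (i) the Euler–Lagrange equation holds along w, i.e. ∂_u α(r, w(r)) = ∂_r β(r, w(r)) for all r ∈ [0,R]; (ii) Q(r) := (1/2)·(∂_{uu} α(r, w(r)) - ∂_{ru} β(r, w(r))) ≤ -κ for all r ∈ [0,R]. Then there exists ε > 0 such that for every continuously differentiable h : [0,R] → ℝ with h(0) = h(R) = 0, h not identically zero, and max(sup|h|, sup|h'|) < ε, one has ∫₀^R F̂(r, w(r)+h(r), w'(r)+h'(r)) dr < ∫₀^R F̂(r, w(r), w'(r)) dr; that is, w is a strict local maximizer of the functional in the W^{1,∞} sense. -/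
/-
Joining `w` to `w + h` by the segment `w + t h`, the difference of the functionals is
`∫₀¹ ∫₀^R ∂ₜ F̂ dr dt`. Because `F̂` is affine in `p`, integrating the `B h'` term by parts
(`h` vanishes at both ends) turns the inner integral into `∫₀^R G(r, w + t h) h dr` with
`G = ∂_u A - ∂_r B`. The Euler–Lagrange equation says `G(r, w r) = 0`, and by Schwarz's theorem
`∂_u G = ∂_uu A - ∂_ru B = 2Q ≤ -2κ` along the graph of `w`, hence `∂_u G < -κ` on a uniform
neighbourhood of the compact graph. For `|h| < ε` the mean value theorem then gives
`G(r, w + t h) h ≤ -κ t h²`, so the difference is at most `-(κ/2) ∫₀^R h² < 0`.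
-/

open MeasureTheory Real intervalIntegral

open Function Set

noncomputable def partialFst (f : ℝ → ℝ → ℝ) (r u : ℝ) : ℝ := deriv (fun s => f s u) r

noncomputable def partialSnd (f : ℝ → ℝ → ℝ) (r u : ℝ) : ℝ := deriv (f r) u

section PartialDerivatives

variable {f : ℝ → ℝ → ℝ} {r u : ℝ}

theorem partialFst_eq_fderiv (hf : DifferentiableAt ℝ (uncurry f) (r, u)) :
    partialFst f r u = fderiv ℝ (uncurry f) (r, u) (1, 0) :=
  (hf.hasFDerivAt.comp_hasDerivAt (f := fun s => (s, u)) r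
    ((hasDerivAt_id r).prodMk (hasDerivAt_const r u))).deriv

theorem partialSnd_eq_fderiv (hf : DifferentiableAt ℝ (uncurry f) (r, u)) :
    partialSnd f r u = fderiv ℝ (uncurry f) (r, u) (0, 1) :=
  (hf.hasFDerivAt.comp_hasDerivAt (f := fun s => (r, s)) u
    ((hasDerivAt_const u r).prodMk (hasDerivAt_id u))).deriv

theorem hasDerivAt_partialSnd (hf : DifferentiableAt ℝ (uncurry f) (r, u)) :
    HasDerivAt (f r) (partialSnd f r u) u :=
  (hf.comp u ((differentiableAt_const r).prodMk differentiableAt_id)).hasDerivAt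

theorem hasDerivAt_comp₂ {g₁ g₂ : ℝ → ℝ} {g₁' g₂' t : ℝ}
    (hf : DifferentiableAt ℝ (uncurry f) (g₁ t, g₂ t))
    (h₁ : HasDerivAt g₁ g₁' t) (h₂ : HasDerivAt g₂ g₂' t) :
    HasDerivAt (fun s => f (g₁ s) (g₂ s))
      (g₁' * partialFst f (g₁ t) (g₂ t) + g₂' * partialSnd f (g₁ t) (g₂ t)) t := by
  refine (hf.hasFDerivAt.comp_hasDerivAt t (h₁.prodMk h₂)).congr_deriv ?_
  have hv : (g₁', g₂') = g₁' • ((1 : ℝ), (0 : ℝ)) + g₂' • ((0 : ℝ), (1 : ℝ)) := by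
    simp
  rw [partialFst_eq_fderiv hf, partialSnd_eq_fderiv hf, hv, map_add, map_smul, map_smul,
    smul_eq_mul, smul_eq_mul]

theorem uncurry_partialFst_eq (hf : Differentiable ℝ (uncurry f)) :
    uncurry (partialFst f) = fun p => fderiv ℝ (uncurry f) p (1, 0) :=
  funext fun p => partialFst_eq_fderiv (hf p)

theorem uncurry_partialSnd_eq (hf : Differentiable ℝ (uncurry f)) :
    uncurry (partialSnd f) = fun p => fderiv ℝ (uncurry f) p (0, 1) :=
  funext fun p => partialSnd_eq_fderiv (hf p)

theorem ContDiff.uncurry_partialFst {n : ℕ} (hf : ContDiff ℝ (n + 1) (uncurry f)) :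
    ContDiff ℝ n (uncurry (partialFst f)) := by
  rw [uncurry_partialFst_eq (hf.differentiable (by simp))]
  exact (hf.fderiv_right le_rfl).clm_apply contDiff_const

theorem ContDiff.uncurry_partialSnd {n : ℕ} (hf : ContDiff ℝ (n + 1) (uncurry f)) :
    ContDiff ℝ n (uncurry (partialSnd f)) := by
  rw [uncurry_partialSnd_eq (hf.differentiable (by simp))]
  exact (hf.fderiv_right le_rfl).clm_apply contDiff_const

theorem partialSnd_partialFst (hf : ContDiff ℝ 2 (uncurry f)) (r u : ℝ) :
    partialSnd (partialFst f) r u = partialFst (partialSnd f) r u := by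
  have hd : Differentiable ℝ (uncurry f) := hf.differentiable (by simp)
  have hd2 : DifferentiableAt ℝ (fderiv ℝ (uncurry f)) (r, u) :=
    (hf.fderiv_right (m := 1) (by norm_num)).differentiable (by simp) _
  have hFst : ContDiff ℝ 1 (uncurry (partialFst f)) := hf.uncurry_partialFst
  have hSnd : ContDiff ℝ 1 (uncurry (partialSnd f)) := hf.uncurry_partialSnd
  rw [partialSnd_eq_fderiv (hFst.differentiable one_ne_zero _),
    partialFst_eq_fderiv (hSnd.differentiable one_ne_zero _), uncurry_partialFst_eq hd,
    uncurry_partialSnd_eq hd, fderiv_clm_apply hd2 (differentiableAt_const _),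
    fderiv_clm_apply hd2 (differentiableAt_const _)]
  simpa using (hf.contDiffAt (x := (r, u))).isSymmSndFDerivAt (by simp) (0, 1) (1, 0)

end PartialDerivatives

theorem integral_sub_eq_integral_integral_of_hasDerivAt {Φ φ : ℝ → ℝ → ℝ} {a b t₀ t₁ : ℝ}
    (hΦ : ∀ r t, HasDerivAt (Φ r) (φ r t) t) (hφ : Continuous (uncurry φ)) :
    ∫ r in a..b, (Φ r t₁ - Φ r t₀) = ∫ t in t₀..t₁, ∫ r in a..b, φ r t := by
  have hFTC : ∀ r, Φ r t₁ - Φ r t₀ = ∫ t in t₀..t₁, φ r t := fun r =>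
    (integral_eq_sub_of_hasDerivAt (fun t _ => hΦ r t)
      ((hφ.comp (Continuous.prodMk_right r)).intervalIntegrable _ _)).symm
  simp_rw [hFTC]
  refine intervalIntegral_intervalIntegral_swap ?_
  exact (hφ.continuousOn.integrableOn_compact (isCompact_uIcc.prod isCompact_uIcc)).mono_set
    (prod_mono uIoc_subset_uIcc uIoc_subset_uIcc)

/-- For `F̂(r, u, p) = A r u + B r u * p`, the Euler–Lagrange expression `∂_u F̂ - d/dr ∂_p F̂`
along any `C¹` curve `u = v(r)`: the terms `∂_u B · v'` cancel, leaving a function of `(r, u)`. -/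
noncomputable def eulerLagrange (A B : ℝ → ℝ → ℝ) (r u : ℝ) : ℝ :=
  partialSnd A r u - partialFst B r u

section AffineLagrangian

variable {A B : ℝ → ℝ → ℝ}

theorem ContDiff.uncurry_eulerLagrange {n : ℕ} (hA : ContDiff ℝ (n + 1) (uncurry A))
    (hB : ContDiff ℝ (n + 1) (uncurry B)) : ContDiff ℝ n (uncurry (eulerLagrange A B)) :=
  hA.uncurry_partialSnd.sub hB.uncurry_partialFst

theorem partialSnd_eulerLagrange (hA : ContDiff ℝ 2 (uncurry A)) (hB : ContDiff ℝ 2 (uncurry B))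
    (r u : ℝ) :
    partialSnd (eulerLagrange A B) r u
      = partialSnd (partialSnd A) r u - partialFst (partialSnd B) r u := by
  have hA' : ContDiff ℝ 1 (uncurry (partialSnd A)) := hA.uncurry_partialSnd
  have hB' : ContDiff ℝ 1 (uncurry (partialFst B)) := hB.uncurry_partialFst
  rw [← partialSnd_partialFst hB]
  exact ((hasDerivAt_partialSnd (hA'.differentiable one_ne_zero _)).sub
    (hasDerivAt_partialSnd (hB'.differentiable one_ne_zero _))).deriv

variable {a b : ℝ} {v v' h h' : ℝ → ℝ}

/-- Integration by parts of the `B h'` term, using `h a = h b = 0`. -/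
theorem integral_firstVariation_eq_integral_eulerLagrange_mul (hA : ContDiff ℝ 1 (uncurry A))
    (hB : ContDiff ℝ 1 (uncurry B)) (hv : ∀ r, HasDerivAt v (v' r) r) (hv' : Continuous v')
    (hh : ∀ r, HasDerivAt h (h' r) r) (hh' : Continuous h') (ha : h a = 0) (hb : h b = 0) :
    ∫ r in a..b, (partialSnd A r (v r) * h r + partialSnd B r (v r) * h r * v' r
        + B r (v r) * h' r)
      = ∫ r in a..b, eulerLagrange A B r (v r) * h r := by
  have hvc : Continuous v := continuous_iff_continuousAt.2 fun r => (hv r).continuousAt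
  have hhc : Continuous h := continuous_iff_continuousAt.2 fun r => (hh r).continuousAt
  have hAu := (hA.uncurry_partialSnd (n := 0)).continuous
  have hBr := (hB.uncurry_partialFst (n := 0)).continuous
  have hBu := (hB.uncurry_partialSnd (n := 0)).continuous
  have hBc := hB.continuous
  have hBd : ∀ r, HasDerivAt (fun r => B r (v r) * h r)
      ((partialFst B r (v r) + partialSnd B r (v r) * v' r) * h r + B r (v r) * h' r) r :=
    fun r => ((hasDerivAt_comp₂ (hB.differentiable one_ne_zero _) (hasDerivAt_id r)
      (hv r)).mul (hh r)).congr_deriv (by simp only [id, one_mul]; ring)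
  have hBdc : Continuous fun r =>
      (partialFst B r (v r) + partialSnd B r (v r) * v' r) * h r + B r (v r) * h' r := by
    fun_prop
  have hELc : Continuous fun r => eulerLagrange A B r (v r) * h r := by
    unfold eulerLagrange; fun_prop
  calc ∫ r in a..b, (partialSnd A r (v r) * h r + partialSnd B r (v r) * h r * v' r
          + B r (v r) * h' r)
      = ∫ r in a..b, (eulerLagrange A B r (v r) * h r
          + ((partialFst B r (v r) + partialSnd B r (v r) * v' r) * h r
            + B r (v r) * h' r)) := by
        congr 1; ext r; simp only [eulerLagrange]; ring
    _ = ∫ r in a..b, eulerLagrange A B r (v r) * h r := by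
        rw [integral_add (hELc.intervalIntegrable _ _) (hBdc.intervalIntegrable _ _),
          integral_eq_sub_of_hasDerivAt (fun r _ => hBd r) (hBdc.intervalIntegrable _ _)]
        simp [ha, hb]

theorem integral_affineLagrangian_sub_eq (hA : ContDiff ℝ 1 (uncurry A))
    (hB : ContDiff ℝ 1 (uncurry B)) (hv : ∀ r, HasDerivAt v (v' r) r) (hv' : Continuous v')
    (hh : ∀ r, HasDerivAt h (h' r) r) (hh' : Continuous h') (ha : h a = 0) (hb : h b = 0) :
    (∫ r in a..b, (A r (v r + h r) + B r (v r + h r) * (v' r + h' r)))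
        - ∫ r in a..b, (A r (v r) + B r (v r) * v' r)
      = ∫ t in (0 : ℝ)..1, ∫ r in a..b, eulerLagrange A B r (v r + t * h r) * h r := by
  have hvc : Continuous v := continuous_iff_continuousAt.2 fun r => (hv r).continuousAt
  have hhc : Continuous h := continuous_iff_continuousAt.2 fun r => (hh r).continuousAt
  have hAu := (hA.uncurry_partialSnd (n := 0)).continuous
  have hBu := (hB.uncurry_partialSnd (n := 0)).continuous
  have hBc := hB.continuous
  set Φ : ℝ → ℝ → ℝ := fun r t => A r (v r + t * h r) + B r (v r + t * h r) * (v' r + t * h' r)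
  set φ : ℝ → ℝ → ℝ := fun r t => partialSnd A r (v r + t * h r) * h r
    + partialSnd B r (v r + t * h r) * h r * (v' r + t * h' r) + B r (v r + t * h r) * h' r
  have hΦ : ∀ r t, HasDerivAt (Φ r) (φ r t) t := fun r t => by
    have hpath : HasDerivAt (fun t => v r + t * h r) (h r) t := by
      simpa using ((hasDerivAt_id t).mul_const (h r)).const_add (v r)
    have hA' := (hasDerivAt_partialSnd (r := r) (hA.differentiable one_ne_zero _)).comp t hpath
    have hB' := (hasDerivAt_partialSnd (r := r) (hB.differentiable one_ne_zero _)).comp t hpath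
    have hlin : HasDerivAt (fun t => v' r + t * h' r) (h' r) t := by
      simpa using ((hasDerivAt_id t).mul_const (h' r)).const_add (v' r)
    exact (hA'.add (hB'.mul hlin)).congr_deriv (by simp only [φ, comp_apply]; ring)
  have hφ : Continuous (uncurry φ) := by fun_prop
  have hΦc : ∀ t, Continuous fun r => Φ r t := fun t => by
    have := hA.continuous; fun_prop
  calc _ = ∫ r in a..b, (Φ r 1 - Φ r 0) := by
        rw [integral_sub ((hΦc 1).intervalIntegrable _ _) ((hΦc 0).intervalIntegrable _ _)]
        simp [Φ]
    _ = ∫ t in (0 : ℝ)..1, ∫ r in a..b, φ r t :=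
        integral_sub_eq_integral_integral_of_hasDerivAt hΦ hφ
    _ = _ := integral_congr fun t _ =>
        integral_firstVariation_eq_integral_eulerLagrange_mul hA hB
          (fun r => (hv r).add ((hh r).const_mul t)) (hv'.add (continuous_const.mul hh'))
          hh hh' ha hb

end AffineLagrangian

theorem IsCompact.exists_pos_forall_lt_near_graph {f : ℝ → ℝ → ℝ} (hf : Continuous (uncurry f))
    {w : ℝ → ℝ} (hw : Continuous w) {s : Set ℝ} (hs : IsCompact s) {c : ℝ}
    (hlt : ∀ r ∈ s, f r (w r) < c) :
    ∃ δ > 0, ∀ r ∈ s, ∀ u ∈ Metric.ball (w r) δ, f r u < c := by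
  obtain ⟨δ, hδ, hsub⟩ := (hs.image (continuous_id.prodMk hw)).exists_thickening_subset_open
    (isOpen_lt hf continuous_const) (by rintro _ ⟨r, hr, rfl⟩; exact hlt r hr)
  refine ⟨δ, hδ, fun r hr u hu => hsub (a := (r, u)) ?_⟩
  refine Metric.mem_thickening_iff.2 ⟨(r, w r), mem_image_of_mem _ hr, ?_⟩
  simpa [Prod.dist_eq, hδ.le] using hu

theorem mul_le_of_hasDerivAt_le {g g' : ℝ → ℝ} {u₀ δ κ t z : ℝ}
    (hg : ∀ u ∈ Metric.ball u₀ δ, HasDerivAt g (g' u) u)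
    (hg' : ∀ u ∈ Metric.ball u₀ δ, g' u ≤ -κ) (hg0 : g u₀ = 0) (ht : t ∈ Icc (0 : ℝ) 1)
    (hz : |z| < δ) : g (u₀ + t * z) * z ≤ t * (-κ * z ^ 2) := by
  have hslope := (convex_ball u₀ δ).image_sub_le_mul_sub_of_deriv_le
    (fun u hu => (hg u hu).continuousAt.continuousWithinAt)
    (fun u hu => (hg u (interior_subset hu)).differentiableAt.differentiableWithinAt)
    (fun u hu => by
      rw [(hg u (interior_subset hu)).deriv]; exact hg' u (interior_subset hu))
  have hu₀ : u₀ ∈ Metric.ball u₀ δ := Metric.mem_ball_self ((abs_nonneg z).trans_lt hz)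
  have htz : u₀ + t * z ∈ Metric.ball u₀ δ := by
    rw [Metric.mem_ball, dist_eq, add_sub_cancel_left, abs_mul, abs_of_nonneg ht.1]
    nlinarith [abs_nonneg z, ht.2]
  rcases le_total 0 z with hz0 | hz0
  · have := hslope u₀ hu₀ _ htz (by nlinarith [ht.1])
    nlinarith [mul_nonneg ht.1 hz0]
  · have := hslope _ htz u₀ hu₀ (by nlinarith [ht.1])
    nlinarith [mul_nonpos_iff.2 (Or.inl ⟨ht.1, hz0⟩)]

theorem integral_integral_le_half_of_le_mul {f : ℝ → ℝ → ℝ} {q : ℝ → ℝ} {a b : ℝ} (hab : a ≤ b)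
    (hf : Continuous (uncurry f)) (hq : Continuous q)
    (hle : ∀ t ∈ Icc (0 : ℝ) 1, ∀ r ∈ Icc a b, f r t ≤ t * q r) :
    ∫ t in (0 : ℝ)..1, ∫ r in a..b, f r t ≤ (∫ r in a..b, q r) / 2 := by
  have hinner : Continuous fun t => ∫ r in a..b, f r t :=
    continuous_parametric_intervalIntegral_of_continuous' (f := fun t r => f r t)
      (hf.comp continuous_swap) a b
  calc ∫ t in (0 : ℝ)..1, ∫ r in a..b, f r t
      ≤ ∫ t in (0 : ℝ)..1, t * ∫ r in a..b, q r := by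
        refine integral_mono_on zero_le_one (hinner.intervalIntegrable _ _)
          ((continuous_id.mul continuous_const).intervalIntegrable _ _) ?_
        intro t ht
        rw [← intervalIntegral.integral_const_mul]
        exact integral_mono_on hab ((hf.comp (Continuous.prodMk_left t)).intervalIntegrable _ _)
          ((continuous_const.mul hq).intervalIntegrable _ _) (hle t ht)
    _ = (∫ r in a..b, q r) / 2 := by
        rw [intervalIntegral.integral_mul_const, integral_id]; ring

/-- Abstract second-variation argument: for a Lagrangian `F̂(r,u,p) = α(r,u) + β(r,u)·p`
affine in the derivative variable, if the Euler–Lagrange equation `∂_u α = ∂_r β` holds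
along `w` and `Q(r) := ½(∂_{uu}α - ∂_{ru}β)(r, w(r)) ≤ -κ < 0` on `[0,R]`, then `w` is a
strict local maximizer of `v ↦ ∫₀^R F̂(r, v, v') dr` among `C¹` perturbations vanishing at
the endpoints, in the `W^{1,∞}` sense. -/
theorem strict_local_maximizer_affine_lagrangian
    (R κ : ℝ) (hR : 0 < R) (hκ : 0 < κ)
    (A B : ℝ → ℝ → ℝ)
    (hA : ContDiff ℝ 3 (fun p : ℝ × ℝ => A p.1 p.2))
    (hB : ContDiff ℝ 3 (fun p : ℝ × ℝ => B p.1 p.2))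
    (w : ℝ → ℝ) (hw : ContDiff ℝ 1 w)
    (hEL : ∀ r ∈ Set.Icc (0 : ℝ) R,
      deriv (fun u => A r u) (w r) = deriv (fun s => B s (w r)) r)
    (hQ : ∀ r ∈ Set.Icc (0 : ℝ) R,
      (1 / 2 : ℝ) * (deriv (deriv (fun u => A r u)) (w r)
        - deriv (fun s => deriv (fun u => B s u) (w r)) r) ≤ -κ) :
    ∃ ε > (0 : ℝ), ∀ h : ℝ → ℝ, ContDiff ℝ 1 h → h 0 = 0 → h R = 0 →
      (∃ r ∈ Set.Icc (0 : ℝ) R, h r ≠ 0) →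
      (∀ r ∈ Set.Icc (0 : ℝ) R, |h r| < ε ∧ |deriv h r| < ε) →
      (∫ r in (0 : ℝ)..R, (A r (w r + h r) + B r (w r + h r) * (deriv w r + deriv h r)))
        < ∫ r in (0 : ℝ)..R, (A r (w r) + B r (w r) * deriv w r) := by
  have hA2 : ContDiff ℝ (1 + 1) (uncurry A) := hA.of_le (by norm_num)
  have hB2 : ContDiff ℝ (1 + 1) (uncurry B) := hB.of_le (by norm_num)
  have hG : ContDiff ℝ (0 + 1) (uncurry (eulerLagrange A B)) := hA2.uncurry_eulerLagrange hB2
  obtain ⟨δ, hδ, hnear⟩ := isCompact_Icc.exists_pos_forall_lt_near_graph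
    hG.uncurry_partialSnd.continuous hw.continuous (c := -κ) fun r hr => by
      -- `hEL` and `hQ` are stated with `deriv`; `partialFst`/`partialSnd` unfold to those terms.
      have hQr : (1 / 2 : ℝ) * (partialSnd (partialSnd A) r (w r)
          - partialFst (partialSnd B) r (w r)) ≤ -κ := hQ r hr
      rw [partialSnd_eulerLagrange hA2 hB2]; linarith
  refine ⟨δ, hδ, fun h hh h0 hR0 ⟨r₀, hr₀, hne⟩ hsmall => ?_⟩
  have hd : ∀ {g : ℝ → ℝ}, ContDiff ℝ 1 g → ∀ r, HasDerivAt g (deriv g r) r :=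
    fun hg r => (hg.differentiable one_ne_zero r).hasDerivAt
  have hhc := hh.continuous
  rw [← sub_neg, integral_affineLagrangian_sub_eq (hA2.of_le (by norm_num))
    (hB2.of_le (by norm_num)) (hd hw) (hw.continuous_deriv le_rfl) (hd hh)
    (hh.continuous_deriv le_rfl) h0 hR0]
  have hpos : 0 < ∫ r in (0 : ℝ)..R, κ * h r ^ 2 :=
    integral_pos hR (by fun_prop) (fun r _ => by positivity) ⟨r₀, hr₀, by positivity⟩
  calc _ ≤ (∫ r in (0 : ℝ)..R, -(κ * h r ^ 2)) / 2 :=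
        integral_integral_le_half_of_le_mul
          (f := fun r t => eulerLagrange A B r (w r + t * h r) * h r)
          hR.le (by have := hG.continuous; fun_prop) (by fun_prop) fun t ht r hr => ?_
    _ < 0 := by rw [intervalIntegral.integral_neg]; linarith
  have := mul_le_of_hasDerivAt_le
    (fun u _ => hasDerivAt_partialSnd (hG.differentiable one_ne_zero _))
    (fun u hu => (hnear r hr u hu).le) (sub_eq_zero.2 (hEL r hr)) ht (hsmall r hr).1
  linarith
end

section
/- Let f, Φ, C, 𝕪 : ℝ → ℝ be continuously differentiable, let U ⊆ ℝ² be open, and let Δ : U → ℝ be continuously differentiable such that 𝕪(θ - Δ(y,θ)) = y - Δ(y,θ) for all (y,θ) ∈ U. Assume the smooth-pasting identity Φ(𝕪(s))·C'(s) + Φ'(𝕪(s))·C(s) = f(𝕪(s)) holds for all s ∈ ℝ. Define V(y,θ) := Φ(y - Δ(y,θ))·C(θ - Δ(y,θ)) + ∫_{y-Δ(y,θ)}^{y} f(x) dx on U. Then V is continuously differentiable on U with ∂V/∂y (y,θ) = Φ'(y - Δ(y,θ))·C(θ - Δ(y,θ)) + f(y) - f(y - Δ(y,θ)) and ∂V/∂θ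 (y,θ) = Φ(y - Δ(y,θ))·C'(θ - Δ(y,θ)). -/
open MeasureTheory Real intervalIntegral

/-!
Writing `∫_{y-Δ}^{y} f = F y - F (y - Δ)` with `F` a primitive of `f`, the chain rule gives the
derivative of `V` at `p`; besides the claimed terms it contains the derivative of `Δ`, with
coefficient `f a - Φ'(a)·C(b) - Φ(a)·C'(b)` where `a = y - Δ`, `b = θ - Δ`. Since `a = 𝕪(b)`,
this coefficient vanishes by smooth pasting at `s = b`.
-/

open ContinuousLinearMap

noncomputable def sellValue (f Φ C : ℝ → ℝ) (Δ : ℝ × ℝ → ℝ) (p : ℝ × ℝ) : ℝ :=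
  Φ (p.1 - Δ p) * C (p.2 - Δ p) + ∫ x in (p.1 - Δ p)..p.1, f x

theorem Continuous.contDiff_one_integral {f : ℝ → ℝ} (hf : Continuous f) (a : ℝ) :
    ContDiff ℝ 1 fun u => ∫ x in a..u, f x :=
  contDiff_one_iff_deriv.2
    ⟨fun u => (hf.integral_hasStrictDerivAt a u).hasDerivAt.differentiableAt, by
      rwa [show deriv (fun u => ∫ x in a..u, f x) = f from
        funext (Continuous.deriv_integral f hf a)]⟩

theorem HasFDerivAt.hasDerivAt_slice_fst {g : ℝ × ℝ → ℝ} {α β : ℝ} {p : ℝ × ℝ}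
    (h : HasFDerivAt g (α • fst ℝ ℝ ℝ + β • snd ℝ ℝ ℝ) p) :
    HasDerivAt (fun y => g (y, p.2)) α p.1 :=
  (h.comp p.1 (hasFDerivAt_prodMk_left p.1 p.2)).hasDerivAt.congr_deriv (by simp)

theorem HasFDerivAt.hasDerivAt_slice_snd {g : ℝ × ℝ → ℝ} {α β : ℝ} {p : ℝ × ℝ}
    (h : HasFDerivAt g (α • fst ℝ ℝ ℝ + β • snd ℝ ℝ ℝ) p) :
    HasDerivAt (fun θ => g (p.1, θ)) β p.2 :=
  (h.comp p.2 (hasFDerivAt_prodMk_right p.1 p.2)).hasDerivAt.congr_deriv (by simp)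

section sellValue

variable {f Φ C : ℝ → ℝ} {Δ : ℝ × ℝ → ℝ}

theorem sellValue_eq_sub_primitive (hf : Continuous f) :
    sellValue f Φ C Δ = fun p => Φ (p.1 - Δ p) * C (p.2 - Δ p) +
      ((∫ x in (0 : ℝ)..p.1, f x) - ∫ x in (0 : ℝ)..(p.1 - Δ p), f x) := by
  funext p
  rw [sellValue, integral_interval_sub_left (hf.intervalIntegrable _ _)
    (hf.intervalIntegrable _ _)]

theorem contDiffOn_sellValue {U : Set (ℝ × ℝ)} (hf : Continuous f) (hΦ : ContDiff ℝ 1 Φ)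
    (hC : ContDiff ℝ 1 C) (hΔ : ContDiffOn ℝ 1 Δ U) :
    ContDiffOn ℝ 1 (sellValue f Φ C Δ) U := by
  have hF := hf.contDiff_one_integral 0
  have ha : ContDiffOn ℝ 1 (fun p : ℝ × ℝ => p.1 - Δ p) U := contDiff_fst.contDiffOn.sub hΔ
  have hb : ContDiffOn ℝ 1 (fun p : ℝ × ℝ => p.2 - Δ p) U := contDiff_snd.contDiffOn.sub hΔ
  rw [sellValue_eq_sub_primitive hf]
  exact ((hΦ.comp_contDiffOn ha).mul (hC.comp_contDiffOn hb)).add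
    ((hF.comp_contDiffOn contDiff_fst.contDiffOn).sub (hF.comp_contDiffOn ha))

theorem hasFDerivAt_sellValue {p : ℝ × ℝ} {L : ℝ × ℝ →L[ℝ] ℝ} (hf : Continuous f)
    (hΦ : DifferentiableAt ℝ Φ (p.1 - Δ p)) (hC : DifferentiableAt ℝ C (p.2 - Δ p))
    (hΔ : HasFDerivAt Δ L p)
    (hpaste : Φ (p.1 - Δ p) * deriv C (p.2 - Δ p) + deriv Φ (p.1 - Δ p) * C (p.2 - Δ p) =
      f (p.1 - Δ p)) :
    HasFDerivAt (sellValue f Φ C Δ)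
      ((deriv Φ (p.1 - Δ p) * C (p.2 - Δ p) + f p.1 - f (p.1 - Δ p)) • fst ℝ ℝ ℝ +
        (Φ (p.1 - Δ p) * deriv C (p.2 - Δ p)) • snd ℝ ℝ ℝ) p := by
  have hF (u : ℝ) : HasDerivAt (fun u => ∫ x in (0 : ℝ)..u, f x) (f u) u :=
    (hf.integral_hasStrictDerivAt 0 u).hasDerivAt
  have ha : HasFDerivAt (fun p : ℝ × ℝ => p.1 - Δ p) (fst ℝ ℝ ℝ - L) p :=
    hasFDerivAt_fst.sub hΔ
  have hb : HasFDerivAt (fun p : ℝ × ℝ => p.2 - Δ p) (snd ℝ ℝ ℝ - L) p :=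
    hasFDerivAt_snd.sub hΔ
  have hV := ((hΦ.hasDerivAt.comp_hasFDerivAt p ha).mul
    (hC.hasDerivAt.comp_hasFDerivAt p hb)).add
      (((hF p.1).comp_hasFDerivAt p hasFDerivAt_fst).sub ((hF _).comp_hasFDerivAt p ha))
  rw [sellValue_eq_sub_primitive hf]
  refine hV.congr_fderiv (ContinuousLinearMap.ext fun v => ?_)
  simp only [add_apply, sub_apply, smul_apply, coe_fst', coe_snd',
    Function.comp_apply, smul_eq_mul]
  linear_combination -L v * hpaste

end sellValue

theorem value_function_sell_region_C1_general
    (f Φ C Ybd : ℝ → ℝ)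
    (hf : ContDiff ℝ 1 f) (hΦ : ContDiff ℝ 1 Φ) (hC : ContDiff ℝ 1 C)
    (U : Set (ℝ × ℝ)) (hU : IsOpen U)
    (Δ : ℝ × ℝ → ℝ) (hΔ : ContDiffOn ℝ 1 Δ U)
    (hfix : ∀ p ∈ U, Ybd (p.2 - Δ p) = p.1 - Δ p)
    (hpaste : ∀ s : ℝ, Φ (Ybd s) * deriv C s + deriv Φ (Ybd s) * C s = f (Ybd s)) :
    let V : ℝ × ℝ → ℝ := fun p =>
      Φ (p.1 - Δ p) * C (p.2 - Δ p) + ∫ x in (p.1 - Δ p)..p.1, f x;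
    ContDiffOn ℝ 1 V U ∧
    ∀ p ∈ U,
      HasDerivAt (fun y => V (y, p.2))
        (deriv Φ (p.1 - Δ p) * C (p.2 - Δ p) + f p.1 - f (p.1 - Δ p)) p.1 ∧
      HasDerivAt (fun θ => V (p.1, θ))
        (Φ (p.1 - Δ p) * deriv C (p.2 - Δ p)) p.2 := by
  refine ⟨contDiffOn_sellValue hf.continuous hΦ hC hΔ, fun p hp => ?_⟩
  have hpaste_p := hpaste (p.2 - Δ p)
  rw [hfix p hp] at hpaste_p
  have hV := hasFDerivAt_sellValue hf.continuous (hΦ.differentiable one_ne_zero _)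
    (hC.differentiable one_ne_zero _)
    ((hΔ.differentiableOn one_ne_zero).differentiableAt (hU.mem_nhds hp)).hasFDerivAt hpaste_p
  exact ⟨hV.hasDerivAt_slice_fst, hV.hasDerivAt_slice_snd⟩

/-- Regularity of the candidate value function in the sell region `S₁`:
with `Δ` determined by `𝕪(θ - Δ(y,θ)) = y - Δ(y,θ)` and the smooth-pasting identity
`Φ(𝕪)·C' + Φ'(𝕪)·C = f(𝕪)`, the function
`V(y,θ) = Φ(y-Δ)·C(θ-Δ) + ∫_{y-Δ}^{y} f` is `C¹` on `U` with
`V_y = Φ'(y-Δ)·C(θ-Δ) + f(y) - f(y-Δ)` and `V_θ = Φ(y-Δ)·C'(θ-Δ)`. -/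
theorem value_function_sell_region_C1
    (f Φ C Ybd : ℝ → ℝ)
    (hf : ContDiff ℝ 1 f) (hΦ : ContDiff ℝ 1 Φ) (hC : ContDiff ℝ 1 C)
    (hYbd : ContDiff ℝ 1 Ybd)
    (U : Set (ℝ × ℝ)) (hU : IsOpen U)
    (Δ : ℝ × ℝ → ℝ) (hΔ : ContDiffOn ℝ 1 Δ U)
    (hfix : ∀ p ∈ U, Ybd (p.2 - Δ p) = p.1 - Δ p)
    (hpaste : ∀ s : ℝ, Φ (Ybd s) * deriv C s + deriv Φ (Ybd s) * C s = f (Ybd s)) :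
    let V : ℝ × ℝ → ℝ := fun p =>
      Φ (p.1 - Δ p) * C (p.2 - Δ p) + ∫ x in (p.1 - Δ p)..p.1, f x;
    ContDiffOn ℝ 1 V U ∧
    ∀ p ∈ U,
      HasDerivAt (fun y => V (y, p.2))
        (deriv Φ (p.1 - Δ p) * C (p.2 - Δ p) + f p.1 - f (p.1 - Δ p)) p.1 ∧
      HasDerivAt (fun θ => V (p.1, θ))
        (Φ (p.1 - Δ p) * deriv C (p.2 - Δ p)) p.2 :=
  value_function_sell_region_C1_general f Φ C Ybd hf hΦ hC U hU Δ hΔ hfix hpaste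
end

section
/- Let f : ℝ → ℝ be twice differentiable with f > 0. (i) If (f'/f)'(y) < (Φ'/Φ)'(y) for all y ∈ ℝ, then there is at most one point y₀ ∈ ℝ with f'(y₀)·Φ(y₀) = f(y₀)·Φ'(y₀). (ii) If (f'/f)'(y) < (Φ''/Φ')'(y) for all y ∈ ℝ, then there is at most one point y∞ ∈ ℝ with f'(y∞)·Φ'(y∞) = f(y∞)·Φ''(y∞). -/
/-!
Both roots are zeros of `f'/f - A/B`, with `(A, B) = (Φ', Φ)` resp. `(Φ'', Φ')`. By hypothesis
this function has negative derivative, so it is strictly decreasing and vanishes at most once.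
This needs `Φ, Φ'` nonvanishing and `Φ, Φ', Φ''` differentiable: differentiating under the
integral sign gives `F_a' = -2 F_{a+1}`, hence `Φ⁽ⁿ⁾(x) = (2β/(√β σ̂))ⁿ F_{a+n}(u(x))`, and
`F_b > 0` for every `b > -1`.
-/

open MeasureTheory Real Filter

/-- `Fa a x = ∫₀^∞ exp(-t² - 2xt) · t^a dt`, a Hermite-type function of negative degree. -/
noncomputable def Fa (a x : ℝ) : ℝ :=
  ∫ t in Set.Ioi (0 : ℝ), Real.exp (-(t ^ 2) - 2 * x * t) * t ^ a

/-- `Phi β σh δ c x = F_a(u(x))` with `a = δ/β - 1` and `u(x) = (c - βx)/(√β·σ̂)`. -/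
noncomputable def Phi (β σh δ c : ℝ) (x : ℝ) : ℝ :=
  Fa (δ / β - 1) ((c - β * x) / (Real.sqrt β * σh))

/-- `M₁ = (f·Φ' - f'·Φ)/D` with `D = (Φ')² - Φ·Φ''`. -/
noncomputable def M1 (β σh δ c : ℝ) (f : ℝ → ℝ) (y : ℝ) : ℝ :=
  (f y * deriv (Phi β σh δ c) y - deriv f y * Phi β σh δ c y) /
    ((deriv (Phi β σh δ c) y) ^ 2 - Phi β σh δ c y * deriv (deriv (Phi β σh δ c)) y)

/-- `M₂ = (f'·Φ' - f·Φ'')/D` with `D = (Φ')² - Φ·Φ''`. -/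
noncomputable def M2 (β σh δ c : ℝ) (f : ℝ → ℝ) (y : ℝ) : ℝ :=
  (deriv f y * deriv (Phi β σh δ c) y - f y * deriv (deriv (Phi β σh δ c)) y) /
    ((deriv (Phi β σh δ c) y) ^ 2 - Phi β σh δ c y * deriv (deriv (Phi β σh δ c)) y)

lemma exp_neg_sq_sub_mul_le {x M : ℝ} (hx : |x| ≤ M) (t : ℝ) :
    exp (-(t ^ 2) - 2 * x * t) ≤ exp (2 * M ^ 2) * exp (-(1 / 2) * t ^ 2) := by
  rw [← exp_add, exp_le_exp]
  have hxM : x ^ 2 ≤ M ^ 2 := sq_le_sq' (abs_le.mp hx).1 (abs_le.mp hx).2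
  nlinarith [sq_nonneg (t + 2 * x)]

lemma integrableOn_exp_neg_sq_sub_mul_mul_rpow {a : ℝ} (ha : -1 < a) (x : ℝ) :
    IntegrableOn (fun t : ℝ => exp (-(t ^ 2) - 2 * x * t) * t ^ a) (Set.Ioi 0) := by
  refine ((integrableOn_rpow_mul_exp_neg_mul_sq (b := 1 / 2) (by norm_num) ha).const_mul
    (exp (2 * x ^ 2))).mono' (by fun_prop) ?_
  filter_upwards [ae_restrict_mem measurableSet_Ioi] with t (ht : 0 < t)
  have hta : 0 ≤ t ^ a := (rpow_pos_of_pos ht a).le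
  rw [norm_of_nonneg (by positivity)]
  calc exp (-(t ^ 2) - 2 * x * t) * t ^ a
      ≤ exp (2 * |x| ^ 2) * exp (-(1 / 2) * t ^ 2) * t ^ a :=
        mul_le_mul_of_nonneg_right (exp_neg_sq_sub_mul_le le_rfl t) hta
    _ = exp (2 * x ^ 2) * (t ^ a * exp (-(1 / 2) * t ^ 2)) := by rw [sq_abs]; ring

lemma Fa_pos {a : ℝ} (ha : -1 < a) (x : ℝ) : 0 < Fa a x := by
  have hpos : ∀ t ∈ Set.Ioi (0 : ℝ), 0 < exp (-(t ^ 2) - 2 * x * t) * t ^ a :=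
    fun t ht => mul_pos (exp_pos _) (rpow_pos_of_pos ht a)
  have hsupp : (Function.support fun t : ℝ => exp (-(t ^ 2) - 2 * x * t) * t ^ a) ∩ Set.Ioi 0 =
      Set.Ioi 0 :=
    Set.inter_eq_right.mpr fun t ht => (hpos t ht).ne'
  rw [Fa, setIntegral_pos_iff_support_of_nonneg_ae
    ((ae_restrict_mem measurableSet_Ioi).mono fun t ht => (hpos t ht).le)
    (integrableOn_exp_neg_sq_sub_mul_mul_rpow ha x), hsupp, volume_Ioi]
  exact ENNReal.zero_lt_top

lemma hasDerivAt_Fa {a : ℝ} (ha : -1 < a) (x₀ : ℝ) :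
    HasDerivAt (Fa a) (-2 * Fa (a + 1) x₀) x₀ := by
  set M := |x₀| + 1
  have hbound : ∀ᵐ t ∂volume.restrict (Set.Ioi 0), ∀ x ∈ Metric.ball x₀ 1,
      ‖-2 * t * (exp (-(t ^ 2) - 2 * x * t) * t ^ a)‖ ≤
        2 * exp (2 * M ^ 2) * (t ^ (a + 1) * exp (-(1 / 2) * t ^ 2)) := by
    filter_upwards [ae_restrict_mem measurableSet_Ioi] with t (ht : 0 < t) x hx
    have hxM : |x| ≤ M := by
      rw [Metric.mem_ball, dist_eq] at hx
      linarith [abs_sub_abs_le_abs_sub x x₀]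
    rw [neg_mul, neg_mul, norm_neg, norm_of_nonneg (by positivity), rpow_add_one ht.ne']
    have hexp := mul_le_mul_of_nonneg_right (exp_neg_sq_sub_mul_le hxM t) (rpow_pos_of_pos ht a).le
    have hdom := mul_le_mul_of_nonneg_left hexp (by positivity : (0 : ℝ) ≤ 2 * t)
    linarith
  have hderiv : ∀ᵐ t ∂volume.restrict (Set.Ioi 0), ∀ x ∈ Metric.ball x₀ 1,
      HasDerivAt (fun x => exp (-(t ^ 2) - 2 * x * t) * t ^ a)
        (-2 * t * (exp (-(t ^ 2) - 2 * x * t) * t ^ a)) x := by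
    refine ae_of_all _ fun t x _ => ?_
    have hlin : HasDerivAt (fun x : ℝ => -(t ^ 2) - 2 * x * t) (-2 * t) x := by
      simpa using (((hasDerivAt_id x).const_mul 2).mul_const t).const_sub (-(t ^ 2))
    exact (hlin.exp.mul_const (t ^ a)).congr_deriv (by ring)
  have key := hasDerivAt_integral_of_dominated_loc_of_deriv_le
    (μ := volume.restrict (Set.Ioi 0)) (F := fun x t => exp (-(t ^ 2) - 2 * x * t) * t ^ a)
    (Metric.ball_mem_nhds x₀ one_pos)
    (Eventually.of_forall fun x => by fun_prop) (integrableOn_exp_neg_sq_sub_mul_mul_rpow ha x₀)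
    (by fun_prop) hbound
    ((integrableOn_rpow_mul_exp_neg_mul_sq (by norm_num) (by linarith)).const_mul _) hderiv
  refine key.2.congr_deriv ?_
  rw [Fa, ← integral_const_mul]
  refine setIntegral_congr_fun measurableSet_Ioi fun t (ht : 0 < t) => ?_
  rw [rpow_add_one ht.ne']
  ring

lemma differentiable_Fa {a : ℝ} (ha : -1 < a) : Differentiable ℝ (Fa a) :=
  fun x => (hasDerivAt_Fa ha x).differentiableAt

section Phi

variable {β σh δ c : ℝ}

lemma iterate_deriv_Phi (h : 0 < δ / β) (n : ℕ) :
    deriv^[n] (Phi β σh δ c) = fun x =>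
      (2 * β / (√β * σh)) ^ n * Fa (δ / β - 1 + n) ((c - β * x) / (√β * σh)) := by
  induction n with
  | zero => funext x; simp [Phi]
  | succ n ih =>
    rw [Function.iterate_succ_apply', ih]
    funext x
    have hu : HasDerivAt (fun x => (c - β * x) / (√β * σh)) (-β / (√β * σh)) x := by
      simpa [neg_div] using (((hasDerivAt_id x).const_mul β).const_sub c).div_const (√β * σh)
    have ha : -1 < δ / β - 1 + n := by linarith [n.cast_nonneg (α := ℝ)]
    refine (((hasDerivAt_Fa ha _).comp x hu).const_mul _).deriv.trans ?_
    rw [Nat.cast_succ, ← add_assoc]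
    ring

lemma differentiable_iterate_deriv_Phi (h : 0 < δ / β) (n : ℕ) :
    Differentiable ℝ (deriv^[n] (Phi β σh δ c)) := by
  rw [iterate_deriv_Phi h]
  exact ((differentiable_Fa (by linarith [n.cast_nonneg (α := ℝ)])).comp (by fun_prop)).const_mul _

lemma iterate_deriv_Phi_pos (hβ : 0 < β) (hσ : 0 < σh) (hδ : 0 < δ) (n : ℕ) (x : ℝ) :
    0 < deriv^[n] (Phi β σh δ c) x := by
  have h : 0 < δ / β := div_pos hδ hβ
  rw [iterate_deriv_Phi h]
  exact mul_pos (by positivity) (Fa_pos (by linarith [n.cast_nonneg (α := ℝ)]) _)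

end Phi

lemma eq_of_deriv_mul_eq_mul_of_deriv_div_lt {f A B : ℝ → ℝ} (hf : Differentiable ℝ f)
    (hf' : Differentiable ℝ (deriv f)) (hf0 : ∀ y, f y ≠ 0) (hA : Differentiable ℝ A)
    (hB : Differentiable ℝ B) (hB0 : ∀ y, B y ≠ 0)
    (hlt : ∀ y, deriv (fun z => deriv f z / f z) y < deriv (fun z => A z / B z) y)
    {y₁ y₂ : ℝ} (h₁ : deriv f y₁ * B y₁ = f y₁ * A y₁) (h₂ : deriv f y₂ * B y₂ = f y₂ * A y₂) :
    y₁ = y₂ := by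
  have hanti : StrictAnti fun z => deriv f z / f z - A z / B z := by
    refine strictAnti_of_deriv_neg fun y => ?_
    rw [deriv_fun_sub ((hf' y).fun_div (hf y) (hf0 y)) ((hA y).fun_div (hB y) (hB0 y))]
    linarith [hlt y]
  have hzero : ∀ y, deriv f y * B y = f y * A y → deriv f y / f y - A y / B y = 0 := by
    intro y hy
    rw [sub_eq_zero, div_eq_div_iff (hf0 y) (hB0 y), hy, mul_comm]
  exact hanti.injective ((hzero y₁ h₁).trans (hzero y₂ h₂).symm)

/-- Uniqueness of the boundary points: (i) under `(f'/f)' < (Φ'/Φ)'` there is at most one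
root of `f'·Φ = f·Φ'`; (ii) under `(f'/f)' < (Φ''/Φ')'` there is at most one root of
`f'·Φ' = f·Φ''`. -/
theorem uniqueness_of_boundary_points (β σh δ c : ℝ) (hβ : 0 < β) (hσ : 0 < σh) (hδ : 0 < δ)
    (f : ℝ → ℝ) (hf : Differentiable ℝ f) (hf' : Differentiable ℝ (deriv f))
    (hfpos : ∀ y : ℝ, 0 < f y) :
    ((∀ y : ℝ, deriv (fun z => deriv f z / f z) y <
        deriv (fun z => deriv (Phi β σh δ c) z / Phi β σh δ c z) y) →
      ∀ y₁ y₂ : ℝ,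
        deriv f y₁ * Phi β σh δ c y₁ = f y₁ * deriv (Phi β σh δ c) y₁ →
        deriv f y₂ * Phi β σh δ c y₂ = f y₂ * deriv (Phi β σh δ c) y₂ →
        y₁ = y₂) ∧
    ((∀ y : ℝ, deriv (fun z => deriv f z / f z) y <
        deriv (fun z => deriv (deriv (Phi β σh δ c)) z / deriv (Phi β σh δ c) z) y) →
      ∀ y₁ y₂ : ℝ,
        deriv f y₁ * deriv (Phi β σh δ c) y₁ = f y₁ * deriv (deriv (Phi β σh δ c)) y₁ →
        deriv f y₂ * deriv (Phi β σh δ c) y₂ = f y₂ * deriv (deriv (Phi β σh δ c)) y₂ →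
        y₁ = y₂) := by
  have hδβ : 0 < δ / β := div_pos hδ hβ
  have hΦ := differentiable_iterate_deriv_Phi (σh := σh) (c := c) hδβ
  have hΦ0 := fun n y => (iterate_deriv_Phi_pos (c := c) hβ hσ hδ n y).ne'
  have hf0 := fun y => (hfpos y).ne'
  exact ⟨fun hlt _ _ => eq_of_deriv_mul_eq_mul_of_deriv_div_lt hf hf' hf0 (hΦ 1) (hΦ 0) (hΦ0 0) hlt,
    fun hlt _ _ => eq_of_deriv_mul_eq_mul_of_deriv_div_lt hf hf' hf0 (hΦ 2) (hΦ 1) (hΦ0 1) hlt⟩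
end
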